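/- arXiv:0908.4071 — 3 statements merged into one kernel-verified Lean document; each statement's English description precedes it below -/
import Mathlib

section
/- Let M be a totally unimodular matrix with column set E and let C be a circuit of its column matroid. Then there exist exactly two vectors α in ker(M) ∩ ℤ^E with all coordinates in {-1,0,+1} and support equal to C, and these two vectors are negatives of each other. -/
/-! Fix `e₀ ∈ C` and a rational kernel vector `y` with support `C` and `y e₀ = 1`. Minimality
of `C` makes the kernel vectors supported in `C` a line, so every integer one is an integer
multiple of `y`, and exactly `±y` qualify as soon as `y` itself is `{-1, 0, 1}`-valued.
For that, the columns in `C \ {e₀}` are independent, so some rows cut out a nonsingular square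
submatrix `B` of them, with `det B = ±1` by total unimodularity; the kernel equation restricted
to these rows reads `B y' = -M_{·,e₀}`, and Cramer's rule writes each entry of `y'` as `±` a
minor of `M`. -/

/-- An integer matrix is totally unimodular if every square submatrix has
determinant in `{-1, 0, 1}`. -/
def IsTU {m n : Type*} [Fintype m] [Fintype n] (M : Matrix m n ℤ) : Prop :=
  ∀ (k : ℕ) (f : Fin k → m) (g : Fin k → n),
    (M.submatrix f g).det ∈ ({-1, 0, 1} : Set ℤ)

/-- A set of columns of `M` is dependent if the columns are linearly dependent over `ℚ`. -/
def ColDep {m n : Type*} [Fintype m] (M : Matrix m n ℤ) (C : Set n) : Prop :=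
  ¬ LinearIndependent ℚ (fun j : C => fun i => (M i j : ℚ))

/-- A circuit of the column matroid of `M` is a minimal dependent set of columns. -/
def IsCircuit {m n : Type*} [Fintype m] (M : Matrix m n ℤ) (C : Set n) : Prop :=
  ColDep M C ∧ ∀ C' ⊂ C, ¬ ColDep M C'

/-- A simple flow of `M` is a nonzero integer vector in `ker M` with entries in
`{-1,0,1}` whose support is a circuit of the column matroid of `M`. -/
def IsSimpleFlow {m n : Type*} [Fintype m] [Fintype n] (M : Matrix m n ℤ) (α : n → ℤ) : Prop :=
  α ≠ 0 ∧ M.mulVec α = 0 ∧ (∀ e, α e = -1 ∨ α e = 0 ∨ α e = 1) ∧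
    IsCircuit M {e | α e ≠ 0}

open Matrix Function

def IsSignVector {ι R : Type*} [Ring R] (v : ι → R) : Prop :=
  ∀ i, v i = -1 ∨ v i = 0 ∨ v i = 1

theorem IsSignVector.neg {ι R : Type*} [Ring R] {v : ι → R} (hv : IsSignVector v) :
    IsSignVector (-v) := by
  intro i
  rcases hv i with h | h | h <;> simp [h]

theorem IsSignVector.exists_intCast_eq {ι : Type*} {y : ι → ℚ} (hy : IsSignVector y) :
    ∃ α : ι → ℤ, IsSignVector α ∧ (Int.cast ∘ α : ι → ℚ) = y := by
  have (i : ι) : ∃ a : ℤ, (a = -1 ∨ a = 0 ∨ a = 1) ∧ (a : ℚ) = y i := by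
    rcases hy i with h | h | h
    · exact ⟨-1, by simp, by simp [h]⟩
    · exact ⟨0, by simp, by simp [h]⟩
    · exact ⟨1, by simp, by simp [h]⟩
  choose α hα hαy using this
  exact ⟨α, hα, funext hαy⟩

namespace Matrix

theorem cramer_mulVec {n R : Type*} [Fintype n] [DecidableEq n] [CommRing R]
    (A : Matrix n n R) (x : n → R) : cramer A (A *ᵥ x) = A.det • x := by
  rw [cramer_eq_adjugate_mulVec, mulVec_mulVec, adjugate_mul, smul_mulVec, one_mulVec]

theorem mulVec_indicator {m n R : Type*} [Fintype n] [CommRing R] (A : Matrix m n R)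
    (s : Set n) [Fintype s] (v : n → R) :
    A *ᵥ s.indicator v = A.submatrix id ((↑) : s → n) *ᵥ fun j => v j := by
  classical
  ext i
  simp only [mulVec, dotProduct, submatrix_apply, id_eq]
  rw [Finset.sum_set_coe (f := fun j => A i j * v j)]
  simp only [Set.indicator_apply, mul_ite, mul_zero, Finset.sum_ite, Finset.sum_const_zero,
    add_zero]
  congr 1
  ext
  simp

theorem exists_det_submatrix_ne_zero {m k K : Type*} [Fintype m] [Fintype k] [DecidableEq k]
    [Field K] (N : Matrix m k K) (h : LinearIndependent K N.col) :
    ∃ f : k → m, (N.submatrix f id).det ≠ 0 := by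
  obtain ⟨κ, a, ha, hspan, hli⟩ := exists_linearIndependent' K N.row
  have : Fintype κ := Fintype.ofInjective a ha
  have hcard : Fintype.card κ = Fintype.card k := by
    have hrank : Nᵀ.rank = Fintype.card k :=
      LinearIndependent.rank_matrix (by rwa [row_transpose])
    rw [linearIndependent_iff_card_eq_finrank_span.mp hli, Set.finrank, hspan,
      ← rank_eq_finrank_span_row, ← rank_transpose, hrank]
  obtain ⟨e⟩ := Fintype.card_eq.mp hcard.symm
  refine ⟨a ∘ e, ?_⟩
  have hrows : LinearIndependent K (N.submatrix (a ∘ e) id).row := hli.comp e e.injective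
  exact ((isUnit_iff_isUnit_det _).mp (linearIndependent_rows_iff_isUnit.mp hrows)).ne_zero

theorem det_map_intCast {n R : Type*} [Fintype n] [DecidableEq n] [CommRing R]
    (A : Matrix n n ℤ) : (A.map (Int.cast : ℤ → R)).det = A.det := by
  simpa using ((Int.castRingHom R).map_det A).symm

end Matrix

theorem support_intCast_comp {ι R : Type*} [AddGroupWithOne R] [CharZero R] (v : ι → ℤ) :
    support (Int.cast ∘ v : ι → R) = support v :=
  support_comp_eq _ Int.cast_eq_zero v

theorem mulVec_intCast_eq_zero_iff {m n : Type*} [Fintype n] {M : Matrix m n ℤ} {v : n → ℤ} :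
    M.map (Int.cast : ℤ → ℚ) *ᵥ (Int.cast ∘ v) = 0 ↔ M *ᵥ v = 0 := by
  simp only [funext_iff, Pi.zero_apply]
  refine forall_congr' fun i => ?_
  have h := RingHom.map_mulVec (Int.castRingHom ℚ) M v i
  rw [Int.coe_castRingHom] at h
  rw [← h, Int.cast_eq_zero]

section ColumnMatroid

variable {m n : Type*} [Fintype m] [Fintype n] {M : Matrix m n ℤ} {C : Set n}

theorem colDep_iff_exists_mulVec_eq_zero :
    ColDep M C ↔ ∃ y : n → ℚ, y ≠ 0 ∧ support y ⊆ C ∧ M.map (Int.cast : ℤ → ℚ) *ᵥ y = 0 := by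
  classical
  set N := (M.map (Int.cast : ℤ → ℚ)).submatrix id ((↑) : C → n)
  have hN (y : n → ℚ) (hy : support y ⊆ C) :
      M.map (Int.cast : ℤ → ℚ) *ᵥ y = N *ᵥ fun j => y j := by
    rw [← mulVec_indicator, Set.indicator_eq_self.mpr hy]
  change ¬ LinearIndependent ℚ N.col ↔ _
  rw [← mulVec_injective_iff, ← N.coe_mulVecLin, injective_iff_map_eq_zero]
  push Not
  simp only [mulVecLin_apply]
  constructor
  · rintro ⟨w, hw, hw0⟩
    let y : n → ℚ := fun e => if h : e ∈ C then w ⟨e, h⟩ else 0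
    have hyC : support y ⊆ C := fun e he => by_contra fun h => he (dif_neg h)
    have hyw : (fun j : C => y j) = w := funext fun j => dif_pos j.2
    refine ⟨y, fun h => hw0 ?_, hyC, by rw [hN y hyC, hyw, hw]⟩
    rw [← hyw, h]
    rfl
  · rintro ⟨y, hy0, hyC, hy⟩
    refine ⟨fun j => y j, by rwa [← hN y hyC], fun h => hy0 (funext fun e => ?_)⟩
    by_contra he
    exact he (congrFun h ⟨e, hyC he⟩)

namespace IsCircuit

variable (hC : IsCircuit M C)
include hC

theorem eq_zero_of_mulVec_eq_zero {z : n → ℚ} (hz : M.map (Int.cast : ℤ → ℚ) *ᵥ z = 0)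
    (hzC : support z ⊆ C) {c : n} (hc : c ∈ C) (hzc : z c = 0) : z = 0 := by
  by_contra hz0
  refine hC.2 (C \ {c}) (Set.sdiff_singleton_ssubset.mpr hc)
    (colDep_iff_exists_mulVec_eq_zero.mpr ⟨z, hz0, fun e he => ⟨hzC he, ?_⟩, hz⟩)
  rintro rfl
  exact he hzc

theorem exists_mulVec_eq_zero : ∃ e₀ ∈ C, ∃ y : n → ℚ,
    M.map (Int.cast : ℤ → ℚ) *ᵥ y = 0 ∧ support y = C ∧ y e₀ = 1 := by
  obtain ⟨y, hy0, hyC, hy⟩ := colDep_iff_exists_mulVec_eq_zero.mp hC.1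
  have hsupp : support y = C :=
    hyC.antisymm fun c hc hyc => hy0 (hC.eq_zero_of_mulVec_eq_zero hy hyC hc hyc)
  obtain ⟨e₀, he₀⟩ := Function.ne_iff.mp hy0
  refine ⟨e₀, hyC he₀, (y e₀)⁻¹ • y, by rw [mulVec_smul, hy, smul_zero], ?_,
    inv_mul_cancel₀ he₀⟩
  rwa [support_const_smul_of_ne_zero _ _ (inv_ne_zero he₀)]

theorem eq_smul_of_mulVec_eq_zero {y z : n → ℚ} (hy : M.map (Int.cast : ℤ → ℚ) *ᵥ y = 0)
    (hyC : support y ⊆ C) (hz : M.map (Int.cast : ℤ → ℚ) *ᵥ z = 0) (hzC : support z ⊆ C)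
    {e₀ : n} (he₀ : e₀ ∈ C) (hy₀ : y e₀ = 1) : z = z e₀ • y := by
  refine sub_eq_zero.mp (hC.eq_zero_of_mulVec_eq_zero ?_ ?_ he₀ (by simp [hy₀]))
  · rw [mulVec_sub, mulVec_smul, hy, hz, smul_zero, sub_zero]
  · exact (support_sub _ _).trans
      (Set.union_subset hzC ((support_smul_subset_right _ _).trans hyC))

theorem eq_smul_of_mulVec_eq_zero_of_int {α β : n → ℤ} (hα : M *ᵥ α = 0) (hαC : support α ⊆ C)
    (hβ : M *ᵥ β = 0) (hβC : support β ⊆ C) {e₀ : n} (he₀ : e₀ ∈ C) (hα₀ : α e₀ = 1) :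
    β = β e₀ • α := by
  have hβα := hC.eq_smul_of_mulVec_eq_zero (mulVec_intCast_eq_zero_iff.mpr hα)
    ((support_intCast_comp α).trans_subset hαC) (mulVec_intCast_eq_zero_iff.mpr hβ)
    ((support_intCast_comp β).trans_subset hβC) he₀ (by simp [hα₀])
  ext e
  have he := congrFun hβα e
  simp only [Function.comp_apply, Pi.smul_apply, smul_eq_mul] at he ⊢
  exact_mod_cast he

end IsCircuit

end ColumnMatroid

section TotallyUnimodular

variable {m n : Type*} [Fintype m] [Fintype n] {M : Matrix m n ℤ}

theorem IsTU.det_submatrix_mem (hTU : IsTU M) {ι : Type*} [Fintype ι] [DecidableEq ι]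
    (f : ι → m) (g : ι → n) : (M.submatrix f g).det ∈ ({-1, 0, 1} : Set ℤ) := by
  let e := Fintype.equivFin ι
  convert hTU _ (f ∘ e.symm) (g ∘ e.symm) using 1
  rw [← det_submatrix_equiv_self e, submatrix_submatrix]
  simp [Function.comp_def]

theorem IsTU.isSignVector_of_mulVec_eq_col (hTU : IsTU M) {ι : Type*} [Fintype ι]
    [DecidableEq ι] {f : ι → m} {g : ι → n} (hdet : (M.submatrix f g).det ≠ 0) {e : n}
    {w : ι → ℚ} (hw : (M.submatrix f g).map (Int.cast : ℤ → ℚ) *ᵥ w = fun t => (M (f t) e : ℚ)) :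
    IsSignVector w := by
  intro i
  have hcol : ((M.submatrix f g).map (Int.cast : ℤ → ℚ)).updateCol i (fun t => (M (f t) e : ℚ))
      = (M.submatrix f (update g i e)).map Int.cast := by
    ext a b
    by_cases hb : b = i <;> simp [hb]
  have hcramer : ((M.submatrix f g).det : ℚ) * w i = (M.submatrix f (update g i e)).det := by
    have := congrFun (cramer_mulVec ((M.submatrix f g).map (Int.cast : ℤ → ℚ)) w) i
    rw [hw, cramer_apply, hcol, det_map_intCast, det_map_intCast] at this
    simpa using this.symm
  have hd := hTU.det_submatrix_mem f g
  have hc := hTU.det_submatrix_mem f (update g i e)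
  simp only [Set.mem_insert_iff, Set.mem_singleton_iff] at hd hc
  replace hd : (M.submatrix f g).det = -1 ∨ (M.submatrix f g).det = 1 := by tauto
  have hwi : w i = (M.submatrix f g).det * (M.submatrix f (update g i e)).det := by
    rcases hd with hd | hd <;> rw [hd] at hcramer ⊢ <;> push_cast at hcramer ⊢ <;> linarith
  rw [hwi]
  rcases hd with hd | hd <;> rcases hc with hc | hc | hc <;> simp [hd, hc]

theorem IsTU.isSignVector_of_isCircuit (hTU : IsTU M) {C : Set n} (hC : IsCircuit M C)
    {y : n → ℚ} (hy : M.map (Int.cast : ℤ → ℚ) *ᵥ y = 0) (hyC : support y ⊆ C) {e₀ : n}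
    (he₀ : e₀ ∈ C) (hy₀ : y e₀ = 1) : IsSignVector y := by
  classical
  set C' := C \ {e₀}
  have hind : LinearIndependent ℚ ((M.map (Int.cast : ℤ → ℚ)).submatrix id ((↑) : C' → n)).col :=
    not_not.mp (hC.2 C' (Set.sdiff_singleton_ssubset.mpr he₀))
  obtain ⟨f, hf⟩ := exists_det_submatrix_ne_zero _ hind
  have hdet : (M.submatrix f ((↑) : C' → n)).det ≠ 0 := by
    intro h
    apply hf
    change ((M.submatrix f ((↑) : C' → n)).map (Int.cast : ℤ → ℚ)).det = 0
    rw [det_map_intCast, h, Int.cast_zero]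
  have hsplit : y = Pi.single e₀ 1 + C'.indicator y := by
    ext e
    by_cases he : e = e₀
    · subst he
      simp [hy₀, C']
    · rw [Pi.add_apply, Pi.single_eq_of_ne he, zero_add, eq_comm, Set.indicator_apply_eq_self]
      exact fun hC' => notMem_support.mp fun hye => hC' ⟨hyC hye, he⟩
  have hsys : (M.submatrix f ((↑) : C' → n)).map (Int.cast : ℤ → ℚ) *ᵥ (-fun j : C' => y j)
      = fun t => (M (f t) e₀ : ℚ) := by
    rw [hsplit, mulVec_add, mulVec_single_one, mulVec_indicator] at hy
    ext t
    rw [mulVec_neg, Pi.neg_apply, neg_eq_iff_eq_neg, eq_neg_iff_add_eq_zero, add_comm]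
    exact congrFun hy (f t)
  have hsign := (hTU.isSignVector_of_mulVec_eq_col hdet hsys).neg
  intro e
  by_cases he : e ∈ C'
  · simpa using hsign ⟨e, he⟩
  · rw [hsplit, Pi.add_apply, Set.indicator_of_notMem he, add_zero, Pi.single_apply]
    split_ifs <;> simp

end TotallyUnimodular

/-- For a TU matrix `M` and a circuit `C` of its column matroid, there are exactly two
integer vectors in `ker M` with entries in `{-1,0,1}` and support equal to `C`, and
they are negatives of each other. -/
theorem stmt4 {r m : ℕ} (M : Matrix (Fin r) (Fin m) ℤ) (hTU : IsTU M)
    (C : Set (Fin m)) (hC : IsCircuit M C) :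
    ∃ α : Fin m → ℤ,
      (M.mulVec α = 0 ∧ (∀ e, α e = -1 ∨ α e = 0 ∨ α e = 1) ∧ {e | α e ≠ 0} = C) ∧
      (M.mulVec (-α) = 0 ∧ (∀ e, (-α) e = -1 ∨ (-α) e = 0 ∨ (-α) e = 1) ∧
        {e | (-α) e ≠ 0} = C) ∧
      α ≠ -α ∧
      ∀ β : Fin m → ℤ,
        (M.mulVec β = 0 ∧ (∀ e, β e = -1 ∨ β e = 0 ∨ β e = 1) ∧ {e | β e ≠ 0} = C) →
        β = α ∨ β = -α := by
  obtain ⟨e₀, he₀, y, hy, hyC, hy₀⟩ := hC.exists_mulVec_eq_zero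
  obtain ⟨α, hαsign, rfl⟩ :=
    (hTU.isSignVector_of_isCircuit hC hy hyC.subset he₀ hy₀).exists_intCast_eq
  have hα : M *ᵥ α = 0 := mulVec_intCast_eq_zero_iff.mp hy
  have hαC : support α = C := (support_intCast_comp α).symm.trans hyC
  have hα₀ : α e₀ = 1 := by simpa using hy₀
  refine ⟨α, ⟨hα, hαsign, hαC⟩, ⟨by rw [mulVec_neg, hα, neg_zero], hαsign.neg,
    (support_neg α).trans hαC⟩, fun h => by simpa [hα₀] using congrFun h e₀, ?_⟩
  rintro β ⟨hβ, hβsign, hβC⟩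
  have hβα := hC.eq_smul_of_mulVec_eq_zero_of_int hα hαC.subset hβ hβC.subset he₀ hα₀
  rcases hβsign e₀ with h | h | h
  · exact Or.inr (by rw [hβα, h, neg_one_smul])
  · exact absurd h (hβC ▸ he₀ : e₀ ∈ {e | β e ≠ 0})
  · exact Or.inl (by rw [hβα, h, one_smul])
end

section
/- Let U be a totally unimodular E-by-s matrix with columns β_1,...,β_s, Gram matrix A = UᵀU with entries a_{ij}, and C_i = supp(β_i). If e ∈ C_h ∩ C_i ∩ C_j for distinct h, i, j, then a_{hi}·a_{ij}·a_{jh} > 0. -/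
/-! A 2×2 minor of a totally unimodular matrix whose four entries are `±1` must vanish, so for
columns `c, d` the products `M e c * M e d` over the rows never take opposite signs. Hence each
Gram entry `a_{cd}` has the sign of `U e c * U e d` for a row `e` in both supports, and the
three signs multiply to `(U e h * U e i * U e j) ^ 2 > 0`. -/

namespace IsTU

variable {m n : Type*} [Fintype m] [Fintype n] {M : Matrix m n ℤ}

theorem isUnit_of_ne_zero (hM : IsTU M) {e : m} {c : n} (hne : M e c ≠ 0) : IsUnit (M e c) := by
  have h := hM 1 (fun _ => e) (fun _ => c)
  simp only [Matrix.det_fin_one, Matrix.submatrix_apply, Set.mem_insert_iff,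
    Set.mem_singleton_iff] at h
  rw [Int.isUnit_iff]
  omega

theorem det_two_mem (hM : IsTU M) (e f : m) (c d : n) :
    M e c * M f d - M e d * M f c ∈ ({-1, 0, 1} : Set ℤ) := by
  have h := hM 2 ![e, f] ![c, d]
  rwa [Matrix.det_fin_two] at h

theorem mul_mul_mul_nonneg (hM : IsTU M) (e f : m) (c d : n) :
    0 ≤ M e c * M e d * (M f c * M f d) := by
  by_cases hzero : M e c = 0 ∨ M e d = 0 ∨ M f c = 0 ∨ M f d = 0
  · rcases hzero with h | h | h | h <;> simp [h]
  push Not at hzero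
  obtain ⟨hec, hed, hfc, hfd⟩ := hzero
  have hx := Int.isUnit_iff.mp ((hM.isUnit_of_ne_zero hec).mul (hM.isUnit_of_ne_zero hfd))
  have hy := Int.isUnit_iff.mp ((hM.isUnit_of_ne_zero hed).mul (hM.isUnit_of_ne_zero hfc))
  have hdet := hM.det_two_mem e f c d
  simp only [Set.mem_insert_iff, Set.mem_singleton_iff] at hdet
  have hxy : M e c * M f d = M e d * M f c := by omega
  calc 0 ≤ (M e c * M f d) * (M e d * M f c) := by rw [hxy]; exact mul_self_nonneg _
    _ = M e c * M e d * (M f c * M f d) := by ring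

theorem mul_gram_pos (hM : IsTU M) {e : m} {c d : n} (hec : M e c ≠ 0) (hed : M e d ≠ 0) :
    0 < M e c * M e d * (M.transpose * M) c d := by
  simp only [Matrix.mul_apply, Matrix.transpose_apply, Finset.mul_sum]
  exact Finset.sum_pos' (fun f _ => hM.mul_mul_mul_nonneg e f c d)
    ⟨e, Finset.mem_univ e, mul_self_pos.mpr (mul_ne_zero hec hed)⟩

end IsTU

theorem stmt12_general {E : Type*} [Fintype E] {s : ℕ}
    (U : Matrix E (Fin s) ℤ) (hTU : IsTU U)
    (h i j : Fin s)
    (e : E) (heh : U e h ≠ 0) (hei : U e i ≠ 0) (hej : U e j ≠ 0) :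
    0 < (U.transpose * U) h i * ((U.transpose * U) i j) * ((U.transpose * U) j h) := by
  have hsigns := mul_pos (mul_pos (hTU.mul_gram_pos heh hei) (hTU.mul_gram_pos hei hej))
    (hTU.mul_gram_pos hej heh)
  refine pos_of_mul_pos_right (a := (U e h * U e i * U e j) ^ 2) ?_ (sq_nonneg _)
  convert hsigns using 1
  ring

/-- For a TU matrix `U` with Gram matrix `A = Uᵀ U`: if some row `e` lies in the
supports of three distinct columns `h, i, j`, then `a_{hi} a_{ij} a_{jh} > 0`. -/
theorem stmt12 {E : Type*} [Fintype E] {s : ℕ}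
    (U : Matrix E (Fin s) ℤ) (hTU : IsTU U)
    (h i j : Fin s) (hhi : h ≠ i) (hij : i ≠ j) (hhj : h ≠ j)
    (e : E) (heh : U e h ≠ 0) (hei : U e i ≠ 0) (hej : U e j ≠ 0) :
    0 < (U.transpose * U) h i * ((U.transpose * U) i j) * ((U.transpose * U) j h) :=
  stmt12_general U hTU h i j e heh hei hej
end

section
/- Let U be a totally unimodular matrix and A = UᵀU. Then A is g-nonnegative: for every nonempty S ⊆ [s], g_A(S) = Σ_{S ⊆ S' ⊆ [s]} (-1)^{|S'\S|} f_A(S') ≥ 0. -/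
/-!
Entries of a totally unimodular `U` lie in `{-1, 0, 1}`, and its `2 × 2` minors force all rows
meeting columns `i` and `j` to contribute the same sign to `(UᵀU) i j`; hence `|(UᵀU) i j|` counts
the rows whose support contains `{i, j}`. A `3 × 3` minor shows that in a triple `i, j, k` without
a negative product one pairwise common support lies inside the support of the third column, so if
`S` has no negative triple, some pair in `S` has the same common support as all of `S`. Therefore
`f_A(S)` is the number of rows whose support contains `S`, and Möbius inversion over the supersets
of `S` turns `g_A(S)` into the number of rows whose support is exactly `S`.
-/

open scoped Classical in
/-- `f_A(S)`: zero if `S` is empty or contains a negative triple; `a_{ii}` if `S = {i}`;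
otherwise the minimum of `|a_{ij}|` over distinct pairs in `S`. -/
noncomputable def fA {s : ℕ} (A : Matrix (Fin s) (Fin s) ℤ) (S : Finset (Fin s)) : ℤ :=
  if ∃ h ∈ S, ∃ i ∈ S, ∃ j ∈ S, h ≠ i ∧ i ≠ j ∧ h ≠ j ∧ A h i * A i j * A j h < 0 then 0
  else if hS : S.card ≤ 1 then ∑ i ∈ S, A i i
  else S.offDiag.inf'
    (Finset.card_pos.mp (by
      rw [Finset.offDiag_card]
      have h2 : 2 ≤ S.card := by omega
      exact Nat.sub_pos_of_lt (by nlinarith)))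
    fun p => |A p.1 p.2|

/-- `g_A(S) = ∑_{S ⊆ S'} (-1)^{|S' \ S|} f_A(S')`. -/
noncomputable def gA {s : ℕ} (A : Matrix (Fin s) (Fin s) ℤ) (S : Finset (Fin s)) : ℤ :=
  ∑ S' ∈ Finset.univ.powerset.filter (fun S' => S ⊆ S'), (-1) ^ (S' \ S).card * fA A S'

open Finset
open scoped Matrix

lemma Int.eq_neg_of_abs_eq_one_of_add_mem {p q : ℤ} (hp : |p| = 1) (hq : |q| = 1)
    (h : p + q ∈ ({-1, 0, 1} : Set ℤ)) : p = -q := by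
  rcases (abs_eq zero_le_one).1 hp with rfl | rfl <;>
  rcases (abs_eq zero_le_one).1 hq with rfl | rfl <;> revert h <;> norm_num

namespace IsTU

variable {m n : Type*} [Fintype m] [Fintype n] {U : Matrix m n ℤ}

lemma abs_apply_eq_one (hU : IsTU U) {e : m} {i : n} (h : U e i ≠ 0) : |U e i| = 1 := by
  have h1 := hU 1 (fun _ => e) (fun _ => i)
  simp only [Matrix.det_fin_one, Matrix.submatrix_apply, Set.mem_insert_iff,
    Set.mem_singleton_iff] at h1
  rcases h1 with h1 | h1 | h1 <;> simp [h1] at h ⊢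

lemma mul_self_apply_eq_one (hU : IsTU U) {e : m} {i : n} (h : U e i ≠ 0) :
    U e i * U e i = 1 := by
  rw [← abs_mul_abs_self, hU.abs_apply_eq_one h, one_mul]

lemma mul_eq_mul_of_ne_zero (hU : IsTU U) {e f : m} {i j : n}
    (hei : U e i ≠ 0) (hej : U e j ≠ 0) (hfi : U f i ≠ 0) (hfj : U f j ≠ 0) :
    U e i * U e j = U f i * U f j := by
  have hdet := hU 2 ![e, f] ![i, j]
  simp only [Matrix.det_fin_two, Matrix.submatrix_apply, Matrix.cons_val_zero,
    Matrix.cons_val_one] at hdet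
  have key : U e i * U f j = -(-(U e j * U f i)) :=
    Int.eq_neg_of_abs_eq_one_of_add_mem
      (by rw [abs_mul, abs_apply_eq_one hU hei, abs_apply_eq_one hU hfj, one_mul])
      (by rw [abs_neg, abs_mul, abs_apply_eq_one hU hej, abs_apply_eq_one hU hfi, one_mul])
      (by rwa [← sub_eq_add_neg])
  linear_combination (U e j * U f j) * key - (U e i * U e j) * hU.mul_self_apply_eq_one hfj
    + (U f i * U f j) * hU.mul_self_apply_eq_one hej

/-- The minor on rows `e₁, e₂, e₃` and columns `i, j, k` is `[[a, b, 0], [0, c, d], [x, 0, y]]`,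
with determinant `acy + bdx`; both terms are `±1` and the sum is in `{-1, 0, 1}`, so
`acy = -bdx`, and the product in question is `(acy) (bdx)`. -/
lemma triple_product_eq_neg_one (hU : IsTU U) {e₁ e₂ e₃ : m} {i j k : n}
    (h₁i : U e₁ i ≠ 0) (h₁j : U e₁ j ≠ 0) (h₁k : U e₁ k = 0)
    (h₂i : U e₂ i = 0) (h₂j : U e₂ j ≠ 0) (h₂k : U e₂ k ≠ 0)
    (h₃i : U e₃ i ≠ 0) (h₃j : U e₃ j = 0) (h₃k : U e₃ k ≠ 0) :
    (U e₁ i * U e₁ j) * (U e₂ j * U e₂ k) * (U e₃ k * U e₃ i) = -1 := by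
  have hdet := hU 3 ![e₁, e₂, e₃] ![i, j, k]
  simp only [Matrix.det_fin_three, Matrix.submatrix_apply, Matrix.cons_val_zero,
    Matrix.cons_val_one, Matrix.cons_val_two, Matrix.head_cons, Matrix.tail_cons,
    h₁k, h₂i, h₃j, mul_zero, zero_mul, sub_zero, add_zero] at hdet
  have key : U e₁ i * U e₂ j * U e₃ k = -(U e₁ j * U e₂ k * U e₃ i) :=
    Int.eq_neg_of_abs_eq_one_of_add_mem
      (by simp only [abs_mul, abs_apply_eq_one hU, h₁i, h₂j, h₃k, ne_eq, not_false_eq_true,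
        mul_one])
      (by simp only [abs_mul, abs_apply_eq_one hU, h₁j, h₂k, h₃i, ne_eq, not_false_eq_true,
        mul_one])
      hdet
  linear_combination (U e₁ j * U e₂ k * U e₃ i) * key
    - (U e₂ k * U e₂ k * (U e₃ i * U e₃ i)) * hU.mul_self_apply_eq_one h₁j
    - (U e₃ i * U e₃ i) * hU.mul_self_apply_eq_one h₂k - hU.mul_self_apply_eq_one h₃i

end IsTU

namespace Matrix

variable {m n : Type*} (U : Matrix m n ℤ)

def colSupport [Fintype m] (i : n) : Finset m := {e | U e i ≠ 0}

def rowSupport [Fintype n] (e : m) : Finset n := {i | U e i ≠ 0}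

@[simp] lemma mem_colSupport [Fintype m] {i : n} {e : m} : e ∈ U.colSupport i ↔ U e i ≠ 0 := by
  simp [colSupport]

@[simp] lemma mem_rowSupport [Fintype n] {i : n} {e : m} : i ∈ U.rowSupport e ↔ U e i ≠ 0 := by
  simp [rowSupport]

variable [Fintype m]

lemma mem_inf_colSupport_iff [DecidableEq m] {S : Finset n} {e : m} :
    e ∈ S.inf U.colSupport ↔ ∀ i ∈ S, U e i ≠ 0 := by
  simp only [mem_inf, mem_colSupport]

lemma transpose_mul_self_apply_eq_sum_inter [DecidableEq m] (i j : n) :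
    (Uᵀ * U) i j = ∑ e ∈ U.colSupport i ∩ U.colSupport j, U e i * U e j := by
  rw [mul_apply]
  refine (sum_subset (subset_univ _) fun e _ he => ?_).symm
  simp only [mem_inter, mem_colSupport, not_and_or, not_not] at he
  rcases he with he | he <;> simp [he]

lemma transpose_mul_self_apply_self_nonneg (i : n) : 0 ≤ (Uᵀ * U) i i :=
  sum_nonneg fun e _ => mul_self_nonneg (U e i)

end Matrix

namespace IsTU

variable {m n : Type*} [Fintype m] [Fintype n] [DecidableEq m] {U : Matrix m n ℤ}

lemma transpose_mul_self_apply_eq (hU : IsTU U) {i j : n} {e : m}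
    (hi : U e i ≠ 0) (hj : U e j ≠ 0) :
    (Uᵀ * U) i j = U e i * U e j * #(U.colSupport i ∩ U.colSupport j) := by
  rw [U.transpose_mul_self_apply_eq_sum_inter, mul_comm, ← nsmul_eq_mul, ← sum_const]
  refine sum_congr rfl fun f hf => ?_
  simp only [mem_inter, Matrix.mem_colSupport] at hf
  exact hU.mul_eq_mul_of_ne_zero hf.1 hf.2 hi hj

lemma abs_transpose_mul_self_apply (hU : IsTU U) (i j : n) :
    |(Uᵀ * U) i j| = #(U.colSupport i ∩ U.colSupport j) := by
  rcases (U.colSupport i ∩ U.colSupport j).eq_empty_or_nonempty with h | ⟨e, he⟩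
  · simp [U.transpose_mul_self_apply_eq_sum_inter, h]
  · simp only [mem_inter, Matrix.mem_colSupport] at he
    obtain ⟨hei, hej⟩ := he
    rw [hU.transpose_mul_self_apply_eq hei hej, abs_mul, abs_mul, abs_apply_eq_one hU hei,
      abs_apply_eq_one hU hej, one_mul, one_mul, Nat.abs_cast]

lemma transpose_mul_self_apply_self (hU : IsTU U) (i : n) :
    (Uᵀ * U) i i = #(U.colSupport i) := by
  rw [← abs_of_nonneg (U.transpose_mul_self_apply_self_nonneg i),
    hU.abs_transpose_mul_self_apply, inter_self]

lemma transpose_mul_self_triple_nonneg_of_mem (hU : IsTU U) {i j k : n} {e : m}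
    (hi : U e i ≠ 0) (hj : U e j ≠ 0) (hk : U e k ≠ 0) :
    0 ≤ (Uᵀ * U) i j * (Uᵀ * U) j k * (Uᵀ * U) k i := by
  rw [hU.transpose_mul_self_apply_eq hi hj, hU.transpose_mul_self_apply_eq hj hk,
    hU.transpose_mul_self_apply_eq hk hi]
  have hsq : U e i * U e j * (U e j * U e k) * (U e k * U e i) = (U e i * U e j * U e k) ^ 2 := by
    ring
  calc (0 : ℤ) ≤ (U e i * U e j * U e k) ^ 2 * #(U.colSupport i ∩ U.colSupport j) *
        #(U.colSupport j ∩ U.colSupport k) * #(U.colSupport k ∩ U.colSupport i) := by positivity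
    _ = _ := by rw [← hsq]; ring

lemma inf_colSupport_le_of_triple_nonneg (hU : IsTU U) {i j k : n}
    (h : 0 ≤ (Uᵀ * U) i j * (Uᵀ * U) j k * (Uᵀ * U) k i) :
    U.colSupport i ⊓ U.colSupport j ≤ U.colSupport k ∨
      U.colSupport j ⊓ U.colSupport k ≤ U.colSupport i ∨
      U.colSupport k ⊓ U.colSupport i ≤ U.colSupport j := by
  by_contra! hc
  obtain ⟨⟨e₁, he₁, he₁k⟩, ⟨e₂, he₂, he₂i⟩, ⟨e₃, he₃, he₃j⟩⟩ :=
    And.imp not_subset.1 (And.imp not_subset.1 not_subset.1) hc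
  rw [inf_eq_inter] at he₁ he₂ he₃
  have hpos : (0 : ℤ) < #(U.colSupport i ∩ U.colSupport j) * #(U.colSupport j ∩ U.colSupport k) *
      #(U.colSupport k ∩ U.colSupport i) := by
    have := card_pos.2 ⟨e₁, he₁⟩; have := card_pos.2 ⟨e₂, he₂⟩; have := card_pos.2 ⟨e₃, he₃⟩
    positivity
  simp only [mem_inter, Matrix.mem_colSupport, not_not] at he₁ he₂ he₃ he₁k he₂i he₃j
  have hsign := hU.triple_product_eq_neg_one he₁.1 he₁.2 he₁k he₂i he₂.1 he₂.2 he₃.2 he₃j he₃.1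
  rw [hU.transpose_mul_self_apply_eq he₁.1 he₁.2, hU.transpose_mul_self_apply_eq he₂.1 he₂.2,
    hU.transpose_mul_self_apply_eq he₃.1 he₃.2] at h
  nlinarith

end IsTU

lemma Finset.exists_pair_inf_le_of_forall_triple {ι α : Type*} [DecidableEq ι] [SemilatticeInf α]
    (C : ι → α) {S : Finset ι} (hS : 2 ≤ #S)
    (h : ∀ i ∈ S, ∀ j ∈ S, ∀ k ∈ S, i ≠ j → j ≠ k → i ≠ k →
      C i ⊓ C j ≤ C k ∨ C j ⊓ C k ≤ C i ∨ C k ⊓ C i ≤ C j) :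
    ∃ i ∈ S, ∃ j ∈ S, i ≠ j ∧ ∀ k ∈ S, C i ⊓ C j ≤ C k := by
  induction S using Finset.induction_on with
  | empty => simp at hS
  | insert a S ha ih =>
    rw [card_insert_of_notMem ha] at hS
    rcases (show #S = 1 ∨ 2 ≤ #S by omega) with hS₁ | hS₂
    · obtain ⟨b, rfl⟩ := card_eq_one.1 hS₁
      refine ⟨a, mem_insert_self _ _, b, by simp, by rintro rfl; simp at ha, ?_⟩
      simp only [forall_mem_insert, mem_singleton, forall_eq]
      exact ⟨inf_le_left, inf_le_right⟩
    obtain ⟨i, hi, j, hj, hij, hle⟩ :=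
      ih hS₂ fun i hi j hj k hk => h i (mem_insert_of_mem hi) j (mem_insert_of_mem hj) k
        (mem_insert_of_mem hk)
    have hia : i ≠ a := by rintro rfl; exact ha hi
    have hja : j ≠ a := by rintro rfl; exact ha hj
    rcases h i (mem_insert_of_mem hi) j (mem_insert_of_mem hj) a (mem_insert_self _ _)
      hij hja hia with H | H | H
    · exact ⟨i, mem_insert_of_mem hi, j, mem_insert_of_mem hj, hij,
        forall_mem_insert _ _ _ |>.2 ⟨H, hle⟩⟩
    · exact ⟨j, mem_insert_of_mem hj, a, mem_insert_self _ _, hja,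
        forall_mem_insert _ _ _ |>.2 ⟨inf_le_right, fun k hk =>
          (le_inf H inf_le_left).trans (hle k hk)⟩⟩
    · exact ⟨a, mem_insert_self _ _, i, mem_insert_of_mem hi, hia.symm,
        forall_mem_insert _ _ _ |>.2 ⟨inf_le_left, fun k hk =>
          (le_inf inf_le_right H).trans (hle k hk)⟩⟩

lemma Finset.sum_superset_neg_one_pow_mul_ite_subset {ι : Type*} [Fintype ι] [DecidableEq ι]
    (S T : Finset ι) :
    ∑ S' ∈ univ.powerset.filter (fun S' => S ⊆ S'), (-1 : ℤ) ^ #(S' \ S) * (if S' ⊆ T then 1 else 0)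
      = if S = T then 1 else 0 := by
  simp only [mul_ite, mul_one, mul_zero]
  rw [← sum_filter]
  by_cases hST : S ⊆ T
  · calc _ = ∑ X ∈ (T \ S).powerset, (-1 : ℤ) ^ #X := ?_
      _ = _ := by
        rw [sum_powerset_neg_one_pow_card]
        refine if_congr ?_ rfl rfl
        rw [sdiff_eq_empty_iff_subset]
        exact ⟨fun h => hST.antisymm h, fun h => h ▸ le_rfl⟩
    refine sum_nbij' (· \ S) (S ∪ ·) ?_ ?_ ?_ ?_ fun _ _ => rfl
    · intro S' hS'
      simp only [mem_filter, mem_powerset] at hS' ⊢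
      exact sdiff_subset_sdiff hS'.2 le_rfl
    · intro X hX
      simp only [mem_filter, mem_powerset] at hX ⊢
      exact ⟨⟨subset_univ _, subset_union_left⟩, union_subset hST (hX.trans sdiff_subset)⟩
    · intro S' hS'
      exact union_sdiff_of_subset (mem_filter.1 (mem_filter.1 hS').1).2
    · intro X hX
      exact union_sdiff_cancel_left (disjoint_of_subset_right (mem_powerset.1 hX) disjoint_sdiff)
  · rw [if_neg (fun h => hST h.subset), sum_eq_zero]
    intro S' hS'
    simp only [mem_filter] at hS'
    exact absurd (hS'.1.2.trans hS'.2) hST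

lemma Matrix.natCast_card_inf_colSupport {m n : Type*} [Fintype m] [Fintype n] [DecidableEq m]
    [DecidableEq n] (U : Matrix m n ℤ) (S : Finset n) :
    (#(S.inf U.colSupport) : ℤ) = ∑ e, if S ⊆ U.rowSupport e then 1 else 0 := by
  rw [← natCast_card_filter]
  congr 2
  ext e
  simp [mem_inf, subset_iff]

namespace IsTU

variable {m : Type*} [Fintype m] [DecidableEq m] {s : ℕ} {U : Matrix m (Fin s) ℤ}

lemma fA_transpose_mul_self (hU : IsTU U) {S : Finset (Fin s)} (hS : S.Nonempty) :
    fA (Uᵀ * U) S = #(S.inf U.colSupport) := by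
  unfold fA
  split_ifs with hneg hcard
  · obtain ⟨h, hh, i, hi, j, hj, -, -, -, hlt⟩ := hneg
    have hempty : S.inf U.colSupport = ∅ := eq_empty_of_forall_notMem fun e he => by
      rw [U.mem_inf_colSupport_iff] at he
      exact hlt.not_ge (hU.transpose_mul_self_triple_nonneg_of_mem (he h hh) (he i hi) (he j hj))
    simp [hempty]
  · obtain ⟨x, rfl⟩ := card_eq_one.1 (le_antisymm hcard hS.card_pos)
    simp [hU.transpose_mul_self_apply_self]
  · push Not at hneg hcard
    obtain ⟨i, hi, j, hj, hij, hle⟩ := exists_pair_inf_le_of_forall_triple U.colSupport hcard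
      fun i hi j hj k hk hij hjk hik =>
        hU.inf_colSupport_le_of_triple_nonneg (hneg i hi j hj k hk hij hjk hik)
    have hinf : U.colSupport i ⊓ U.colSupport j = S.inf U.colSupport :=
      le_antisymm (Finset.le_inf hle) (le_inf (Finset.inf_le hi) (Finset.inf_le hj))
    have hij' : (i, j) ∈ S.offDiag := mem_offDiag.2 ⟨hi, hj, hij⟩
    refine le_antisymm (inf'_le_of_le _ hij' ?_) (le_inf' _ _ ?_)
    · rw [hU.abs_transpose_mul_self_apply, ← inf_eq_inter, hinf]
    · rintro ⟨p, q⟩ hpq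
      rw [mem_offDiag] at hpq
      rw [hU.abs_transpose_mul_self_apply]
      exact_mod_cast card_le_card (le_inf (Finset.inf_le hpq.1) (Finset.inf_le hpq.2.1))

end IsTU

/-- If `U` is TU then `A = UᵀU` is `g`-nonnegative: `g_A(S) ≥ 0` for every nonempty `S`. -/
theorem stmt14 {E : Type*} [Fintype E] {s : ℕ}
    (U : Matrix E (Fin s) ℤ) (hTU : IsTU U)
    (A : Matrix (Fin s) (Fin s) ℤ) (hA : A = U.transpose * U)
    (S : Finset (Fin s)) (hS : S.Nonempty) :
    0 ≤ gA A S := by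
  classical
  subst hA
  have hf : ∀ S' ∈ univ.powerset.filter (fun S' => S ⊆ S'),
      fA (Uᵀ * U) S' = ∑ e, if S' ⊆ U.rowSupport e then 1 else 0 := fun S' hS' => by
    rw [hTU.fA_transpose_mul_self (hS.mono (mem_filter.1 hS').2), U.natCast_card_inf_colSupport]
  have hg : gA (Uᵀ * U) S = ∑ e, if S = U.rowSupport e then 1 else 0 := by
    rw [gA, sum_congr rfl fun S' hS' => by rw [hf S' hS', mul_sum], sum_comm]
    exact sum_congr rfl fun e _ => sum_superset_neg_one_pow_mul_ite_subset S _
  rw [hg]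
  exact sum_nonneg fun _ _ => by split_ifs <;> norm_num
end
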